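/- Let 0 < r < 1 and 1 ≤ p < ∞. The inclusion ℓ_p ⊆ t_p^r holds: if ∑_k |x_k|^p < ∞ then the sequence y_n = ∑_{k=n}^∞ C(k,n)(1-r)^{n+1} r^{k-n} x_k is well-defined and ∑_n |y_n|^p < ∞. -/

import Mathlib

noncomputable def taylorEntry (r : ℝ) (n k : ℕ) : ℝ :=
  if n ≤ k then (k.choose n : ℝ) * (1 - r) ^ (n + 1) * r ^ (k - n) else 0

noncomputable def taylorTransform (r : ℝ) (x : ℕ → ℝ) (n : ℕ) : ℝ :=
  ∑' k, taylorEntry r n k * x k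

/-- The Taylor sequence space `t_p^r`. -/
def TaylorLp (r p : ℝ) : Set (ℕ → ℝ) :=
  {x | (∀ n, Summable fun k => |taylorEntry r n k * x k|) ∧
    Summable fun n => |taylorTransform r x n| ^ p}

/-! The Taylor matrix `T = (taylorEntry r n k)` is nonnegative with row sums `1` and column
sums `1 - r`, so `x ↦ T x` is bounded on `ℓ_p`: by Jensen's inequality for the probability
weights of row `n`, `|(T x)_n|^p ≤ ∑_k T_{nk} |x_k|^p`, and summing over `n` and exchanging
the order of summation gives `∑_n |(T x)_n|^p ≤ (1 - r) ∑_k |x_k|^p`. -/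

open Finset

lemma le_one_add_rpow {t p : ℝ} (ht : 0 ≤ t) (hp : 1 ≤ p) : t ≤ 1 + t ^ p := by
  rcases le_total t 1 with h | h
  · linarith [Real.rpow_nonneg ht p]
  · linarith [Real.self_le_rpow_of_one_le h hp]

section Jensen

variable {ι : Type*} {w t : ι → ℝ} {p : ℝ}

/-- Jensen's inequality, with the missing mass of the weights put at `0`, where `x ^ p`
vanishes. -/
lemma rpow_sum_le_sum_rpow_of_sum_le_one (s : Finset ι) (hp : 1 ≤ p)
    (hw : ∀ i ∈ s, 0 ≤ w i) (hw1 : ∑ i ∈ s, w i ≤ 1) (ht : ∀ i ∈ s, 0 ≤ t i) :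
    (∑ i ∈ s, w i * t i) ^ p ≤ ∑ i ∈ s, w i * t i ^ p := by
  have h := (convexOn_rpow hp).map_add_sum_le (q := 0) hw (by ring : 1 - ∑ i ∈ s, w i + _ = 1)
    ht (by linarith) (Set.mem_Ici.2 le_rfl)
  simpa [Real.zero_rpow (by linarith : p ≠ 0)] using h

lemma rpow_tsum_le_tsum_rpow_of_tsum_le_one (hp : 1 ≤ p) (hw : ∀ i, 0 ≤ w i)
    (ht : ∀ i, 0 ≤ t i) (hws : Summable w) (hw1 : ∑' i, w i ≤ 1)
    (hwt : Summable fun i => w i * t i) (hwtp : Summable fun i => w i * t i ^ p) :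
    (∑' i, w i * t i) ^ p ≤ ∑' i, w i * t i ^ p := by
  have hfinite (s : Finset ι) : (∑ i ∈ s, w i * t i) ^ p ≤ ∑' i, w i * t i ^ p :=
    calc (∑ i ∈ s, w i * t i) ^ p ≤ ∑ i ∈ s, w i * t i ^ p :=
          rpow_sum_le_sum_rpow_of_sum_le_one s hp (fun i _ => hw i)
            ((hws.sum_le_tsum s fun i _ => hw i).trans hw1) fun i _ => ht i
      _ ≤ ∑' i, w i * t i ^ p :=
          hwtp.sum_le_tsum s fun i _ => mul_nonneg (hw i) (Real.rpow_nonneg (ht i) p)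
  have hcont : ContinuousAt (fun y : ℝ => y ^ p) (∑' i, w i * t i) :=
    Real.continuousAt_rpow_const _ p (Or.inr (by linarith))
  exact le_of_tendsto (hcont.tendsto.comp hwt.hasSum) (Filter.Eventually.of_forall hfinite)

end Jensen

section NonnegMatrix

variable {ι κ : Type*} {a : ι → κ → ℝ} {x : κ → ℝ} {p C : ℝ}

lemma summable_prod_mul_abs_rpow (ha : ∀ n k, 0 ≤ a n k)
    (hcol : ∀ k, Summable fun n => a n k) (hC : ∀ k, ∑' n, a n k ≤ C)
    (hx : Summable fun k => |x k| ^ p) :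
    Summable fun q : ι × κ => a q.1 q.2 * |x q.2| ^ p := by
  have hnonneg : 0 ≤ fun q : κ × ι => a q.2 q.1 * |x q.1| ^ p :=
    fun q => mul_nonneg (ha _ _) (Real.rpow_nonneg (abs_nonneg _) p)
  have hcolsum : Summable fun k => ∑' n, a n k * |x k| ^ p := by
    refine Summable.of_nonneg_of_le (fun k => tsum_nonneg fun n => hnonneg (k, n))
      (fun k => ?_) (hx.mul_left C)
    rw [tsum_mul_right]
    exact mul_le_mul_of_nonneg_right (hC k) (Real.rpow_nonneg (abs_nonneg _) p)
  have hswap : Summable fun q : κ × ι => a q.2 q.1 * |x q.1| ^ p :=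
    (summable_prod_of_nonneg hnonneg).2 ⟨fun k => (hcol k).mul_right (|x k| ^ p), hcolsum⟩
  exact hswap.prod_symm

variable (ha : ∀ n k, 0 ≤ a n k) (hrow : ∀ n, Summable (a n))
  (hcol : ∀ k, Summable fun n => a n k) (hC : ∀ k, ∑' n, a n k ≤ C)
  (hx : Summable fun k => |x k| ^ p)
include ha hrow hcol hC hx

lemma summable_abs_mul_of_summable_abs_rpow (hp : 1 ≤ p) (n : ι) :
    Summable fun k => |a n k * x k| := by
  have hrow_p := (summable_prod_mul_abs_rpow ha hcol hC hx).prod_factor n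
  refine Summable.of_nonneg_of_le (fun k => abs_nonneg _) (fun k => ?_) ((hrow n).add hrow_p)
  rw [abs_mul, abs_of_nonneg (ha n k), ← mul_one_add]
  exact mul_le_mul_of_nonneg_left (le_one_add_rpow (abs_nonneg _) hp) (ha n k)

lemma summable_abs_tsum_mul_rpow (hp : 1 ≤ p) (hrow1 : ∀ n, ∑' k, a n k ≤ 1) :
    Summable fun n => |∑' k, a n k * x k| ^ p := by
  have hprod := summable_prod_mul_abs_rpow ha hcol hC hx
  have hrow_abs (n : ι) := summable_abs_mul_of_summable_abs_rpow ha hrow hcol hC hx hp n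
  have habs (n : ι) : Summable fun k => a n k * |x k| := by
    simpa only [abs_mul, abs_of_nonneg (ha n _)] using hrow_abs n
  refine Summable.of_nonneg_of_le (fun n => Real.rpow_nonneg (abs_nonneg _) p) (fun n => ?_)
    hprod.prod
  calc |∑' k, a n k * x k| ^ p ≤ (∑' k, a n k * |x k|) ^ p := by
        refine Real.rpow_le_rpow (abs_nonneg _) ?_ (by linarith)
        simpa only [Real.norm_eq_abs, abs_mul, abs_of_nonneg (ha n _)] using
          norm_tsum_le_tsum_norm (f := fun k => a n k * x k)
            (by simpa only [Real.norm_eq_abs] using hrow_abs n)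
    _ ≤ ∑' k, a n k * |x k| ^ p :=
        rpow_tsum_le_tsum_rpow_of_tsum_le_one hp (ha n) (fun k => abs_nonneg _) (hrow n)
          (hrow1 n) (habs n) (hprod.prod_factor n)

end NonnegMatrix

lemma taylorEntry_nonneg {r : ℝ} (hr0 : 0 ≤ r) (hr1 : r ≤ 1) (n k : ℕ) :
    0 ≤ taylorEntry r n k := by
  unfold taylorEntry
  split_ifs
  · have : 0 ≤ 1 - r := by linarith
    positivity
  · exact le_rfl

lemma taylorEntry_of_lt {r : ℝ} {n k : ℕ} (h : k < n) : taylorEntry r n k = 0 :=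
  if_neg (by omega)

/-- Row `n` is the negative binomial series `∑_j C(n+j, n) r^j = (1 - r)^{-(n+1)}`. -/
lemma hasSum_taylorEntry_row {r : ℝ} (hr : |r| < 1) (n : ℕ) :
    HasSum (fun k => taylorEntry r n k) 1 := by
  have hshift : HasSum (fun j => taylorEntry r n (j + n)) 1 := by
    have h := (hasSum_choose_mul_geometric_of_norm_lt_one n (r := r) hr).mul_left
      ((1 - r) ^ (n + 1))
    rw [mul_one_div_cancel (pow_ne_zero _ (by linarith [le_abs_self r]))] at h
    refine h.congr_fun fun j => ?_
    unfold taylorEntry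
    rw [if_pos (Nat.le_add_left n j), Nat.add_sub_cancel]
    ring
  have hhead : ∑ k ∈ range n, taylorEntry r n k = 0 :=
    sum_eq_zero fun k hk => taylorEntry_of_lt (mem_range.1 hk)
  simpa [hhead] using (hasSum_nat_add_iff n).1 hshift

/-- Column `k` is `(1 - r)` times the binomial expansion of `((1 - r) + r)^k`. -/
lemma hasSum_taylorEntry_col (r : ℝ) (k : ℕ) :
    HasSum (fun n => taylorEntry r n k) (1 - r) := by
  have hfinite : ∑ n ∈ range (k + 1), taylorEntry r n k = 1 - r := by
    calc ∑ n ∈ range (k + 1), taylorEntry r n k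
        = (1 - r) * ∑ n ∈ range (k + 1), (1 - r) ^ n * r ^ (k - n) * (k.choose n : ℝ) := by
          rw [mul_sum]
          refine sum_congr rfl fun n hn => ?_
          unfold taylorEntry
          rw [if_pos (Nat.lt_succ_iff.1 (mem_range.1 hn))]
          ring
      _ = 1 - r := by rw [← add_pow]; ring
  rw [← hfinite]
  exact hasSum_sum_of_ne_finset_zero fun n hn =>
    taylorEntry_of_lt (by simpa using hn)

/-- For `0 < r < 1` and `1 ≤ p < ∞`, the inclusion `ℓ_p ⊆ t_p^r` holds : if
`∑_k |x_k|^p < ∞`, then the Taylor transform of `x` is well defined and lies in `ℓ_p`. -/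
theorem lp_subset_taylorLp (r p : ℝ) (hr0 : 0 < r) (hr1 : r < 1) (hp : 1 ≤ p)
    (x : ℕ → ℝ) (hx : Summable fun k => |x k| ^ p) :
    x ∈ TaylorLp r p := by
  have hr : |r| < 1 := abs_lt.2 ⟨by linarith, hr1⟩
  have ha := taylorEntry_nonneg hr0.le hr1.le
  have hrow (n : ℕ) := (hasSum_taylorEntry_row hr n).summable
  have hrow1 (n : ℕ) := (hasSum_taylorEntry_row hr n).tsum_eq.le
  have hcol (k : ℕ) := (hasSum_taylorEntry_col r k).summable
  have hC (k : ℕ) := (hasSum_taylorEntry_col r k).tsum_eq.le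
  exact ⟨summable_abs_mul_of_summable_abs_rpow ha hrow hcol hC hx hp,
    summable_abs_tsum_mul_rpow ha hrow hcol hC hx hp hrow1⟩
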